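/- arXiv:1605.03044 — 2 statements merged into one kernel-verified Lean document; each statement's English description precedes it below -/
import Mathlib

section
/- Let c ∈ ℂ* with cΓ = Γ and c(s+Γ) = s+Γ, let τ: (Ω,+) → (ℂ*,·) be a group homomorphism, and let d ∈ ℂ* with d² = c^{−1}. Then the ℂ-linear map σ: SV → SV defined on basis elements by σ(L_{α,i}) = τ(α)·c^{i−1}·L_{cα,i} (α ∈ Γ, i ∈ ℤ_{≥0}) and σ(G_{μ,i}) = τ(μ)·c^{i}·d·G_{cμ,i} (μ ∈ s+Γ, i ∈ ℤ_{≥0}) is an automorphism of SV. -/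
noncomputable section

namespace SVSuper

variable (Γ : AddSubgroup ℂ) (s : ℂ)

/-- Basis index type of `SV[Γ,s]`: `Sum.inl (α, i)` stands for `L_{α,i}` (`α ∈ Γ`),
`Sum.inr (μ, j)` stands for `G_{μ,j}` (`μ ∈ s + Γ`). -/
abbrev Idx : Type := (Γ × ℕ) ⊕ ({μ : ℂ // μ - s ∈ Γ} × ℕ)

/-- The underlying vector space of `SV[Γ,s]`: the free `ℂ`-module on `Idx`. -/
abbrev SV : Type := Idx Γ s →₀ ℂ

/-- The basis vector `L_{α,i}`. -/
def lgen (α : ℂ) (hα : α ∈ Γ) (i : ℕ) : SV Γ s :=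
  Finsupp.single (Sum.inl (⟨α, hα⟩, i)) 1

/-- The basis vector `G_{μ,j}`. -/
def ggen (μ : ℂ) (hμ : μ - s ∈ Γ) (j : ℕ) : SV Γ s :=
  Finsupp.single (Sum.inr (⟨μ, hμ⟩, j)) 1

theorem memLG {α μ : ℂ} (hα : α ∈ Γ) (hμ : μ - s ∈ Γ) : α + μ - s ∈ Γ := by
  have h : α + μ - s = α + (μ - s) := by ring
  rw [h]; exact add_mem hα hμ

theorem memGG (hs : 2 * s ∈ Γ) {μ ν : ℂ} (hμ : μ - s ∈ Γ) (hν : ν - s ∈ Γ) :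
    μ + ν ∈ Γ := by
  have h : μ + ν = (μ - s) + (ν - s) + 2 * s := by ring
  rw [h]; exact add_mem (add_mem hμ hν) hs

/-- The bracket on basis vectors (any symbol with second index `-1` is interpreted as `0`;
here this is automatic since the corresponding coefficient vanishes when `i = j = 0`). -/
def bk (hs : 2 * s ∈ Γ) : Idx Γ s → Idx Γ s → SV Γ s
  | Sum.inl (⟨α, hα⟩, i), Sum.inl (⟨β, hβ⟩, j) =>
      (β - α) • lgen Γ s (α + β) (add_mem hα hβ) (i + j)
        + ((j : ℂ) - (i : ℂ)) • lgen Γ s (α + β) (add_mem hα hβ) (i + j - 1)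
  | Sum.inl (⟨α, hα⟩, i), Sum.inr (⟨μ, hμ⟩, j) =>
      (μ - α / 2) • ggen Γ s (α + μ) (memLG Γ s hα hμ) (i + j)
        + ((j : ℂ) - (i : ℂ) / 2) • ggen Γ s (α + μ) (memLG Γ s hα hμ) (i + j - 1)
  | Sum.inr (⟨μ, hμ⟩, i), Sum.inl (⟨α, hα⟩, j) =>
      -((μ - α / 2) • ggen Γ s (α + μ) (memLG Γ s hα hμ) (j + i)
        + ((i : ℂ) - (j : ℂ) / 2) • ggen Γ s (α + μ) (memLG Γ s hα hμ) (j + i - 1))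
  | Sum.inr (⟨μ, hμ⟩, i), Sum.inr (⟨ν, hν⟩, j) =>
      (2 : ℂ) • lgen Γ s (μ + ν) (memGG Γ s hs hμ hν) (i + j)

/-- The bilinear bracket of `SV[Γ,s]`. -/
def bkt (hs : 2 * s ∈ Γ) (x y : SV Γ s) : SV Γ s :=
  x.sum fun a ca => y.sum fun b cb => (ca * cb) • bk Γ s hs a b

/-- `x` lies in the even part `SV_0̄` (the span of the `L_{α,i}`). -/
def IsEvenElt (x : SV Γ s) : Prop := ∀ b, x (Sum.inr b) = 0

/-- `x` lies in the odd part `SV_1̄` (the span of the `G_{μ,j}`). -/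
def IsOddElt (x : SV Γ s) : Prop := ∀ a, x (Sum.inl a) = 0

/-- `x` is `ℤ₂`-homogeneous. -/
def IsHomog (x : SV Γ s) : Prop := IsEvenElt Γ s x ∨ IsOddElt Γ s x

/-- `x` lies in the degree-`γ` component `SV_γ = span{L_{γ,i}, G_{γ,i}}` of the `Ω`-grading. -/
def InDeg (γ : ℂ) (x : SV Γ s) : Prop :=
  (∀ p : Γ × ℕ, (p.1 : ℂ) ≠ γ → x (Sum.inl p) = 0) ∧
  (∀ q : {μ : ℂ // μ - s ∈ Γ} × ℕ, (q.1 : ℂ) ≠ γ → x (Sum.inr q) = 0)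

/-- The group `Ω`, generated by `Γ ∪ {s}`. -/
def Omega : AddSubgroup ℂ := Γ ⊔ AddSubgroup.closure {s}

theorem gamma_mem_Omega {α : ℂ} (hα : α ∈ Γ) : α ∈ Omega Γ s :=
  AddSubgroup.mem_sup_left hα

theorem s_mem_Omega : s ∈ Omega Γ s :=
  AddSubgroup.mem_sup_right (AddSubgroup.subset_closure (Set.mem_singleton s))

theorem smu_mem_Omega {μ : ℂ} (hμ : μ - s ∈ Γ) : μ ∈ Omega Γ s := by
  have h := add_mem (gamma_mem_Omega Γ s hμ) (s_mem_Omega Γ s)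
  rwa [sub_add_cancel] at h

/-- The `Ω`-degree of a basis index. -/
def idxDeg : Idx Γ s → ℂ
  | Sum.inl p => (p.1 : ℂ)
  | Sum.inr q => (q.1 : ℂ)

theorem idxDeg_mem (a : Idx Γ s) : idxDeg Γ s a ∈ Omega Γ s := by
  cases a with
  | inl p => exact gamma_mem_Omega Γ s p.1.2
  | inr q => exact smu_mem_Omega Γ s q.1.2

/-- The derivation `D_φ` attached to a group homomorphism `φ : (Ω,+) → (ℂ,+)`:
`D_φ (L_{α,i}) = φ(α) • L_{α,i}` and `D_φ (G_{μ,j}) = φ(μ) • G_{μ,j}`. -/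
def Dphi (φ : ↥(Omega Γ s) →+ ℂ) : SV Γ s →ₗ[ℂ] SV Γ s :=
  Finsupp.lsum ℂ fun a => φ ⟨idxDeg Γ s a, idxDeg_mem Γ s a⟩ • Finsupp.lsingle a

/-- `D` is a parity-`0` (even) derivation of `SV[Γ,s]`. -/
def IsEvenDer (hs : 2 * s ∈ Γ) (D : SV Γ s →ₗ[ℂ] SV Γ s) : Prop :=
  (∀ x, IsEvenElt Γ s x → IsEvenElt Γ s (D x)) ∧
  (∀ x, IsOddElt Γ s x → IsOddElt Γ s (D x)) ∧
  (∀ x y, IsHomog Γ s x →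
    D (bkt Γ s hs x y) = bkt Γ s hs (D x) y + bkt Γ s hs x (D y))

/-- `D` is a parity-`1` (odd) derivation of `SV[Γ,s]`. -/
def IsOddDer (hs : 2 * s ∈ Γ) (D : SV Γ s →ₗ[ℂ] SV Γ s) : Prop :=
  (∀ x, IsEvenElt Γ s x → IsOddElt Γ s (D x)) ∧
  (∀ x, IsOddElt Γ s x → IsEvenElt Γ s (D x)) ∧
  (∀ x y, IsEvenElt Γ s x →
    D (bkt Γ s hs x y) = bkt Γ s hs (D x) y + bkt Γ s hs x (D y)) ∧
  (∀ x y, IsOddElt Γ s x →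
    D (bkt Γ s hs x y) = bkt Γ s hs (D x) y - bkt Γ s hs x (D y))

/-- `D` is a derivation of `SV[Γ,s]`: a sum of an even and an odd derivation. -/
def IsDer (hs : 2 * s ∈ Γ) (D : SV Γ s →ₗ[ℂ] SV Γ s) : Prop :=
  ∃ D0 D1, IsEvenDer Γ s hs D0 ∧ IsOddDer Γ s hs D1 ∧ D = D0 + D1

/-- `D` has degree `γ`: it maps `SV_δ` into `SV_{δ+γ}` for every `δ`. -/
def HasDeg (γ : ℂ) (D : SV Γ s →ₗ[ℂ] SV Γ s) : Prop :=
  ∀ (δ : ℂ) (x : SV Γ s), InDeg Γ s δ x → InDeg Γ s (δ + γ) (D x)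

/-- `ψ` is a 2-cocycle on `SV[Γ,s]` (super skew-symmetry and super Jacobi identity,
with the sign `(-1)^{|x||y|}` spelled out according to the parities). -/
def IsCocycle (hs : 2 * s ∈ Γ) (ψ : SV Γ s →ₗ[ℂ] SV Γ s →ₗ[ℂ] ℂ) : Prop :=
  (∀ x y, IsHomog Γ s x → IsHomog Γ s y → (IsEvenElt Γ s x ∨ IsEvenElt Γ s y) →
    ψ x y = - ψ y x) ∧
  (∀ x y, IsOddElt Γ s x → IsOddElt Γ s y → ψ x y = ψ y x) ∧
  (∀ x y z, IsHomog Γ s x → IsHomog Γ s y → (IsEvenElt Γ s x ∨ IsEvenElt Γ s y) →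
    ψ x (bkt Γ s hs y z) = ψ (bkt Γ s hs x y) z + ψ y (bkt Γ s hs x z)) ∧
  (∀ x y z, IsOddElt Γ s x → IsOddElt Γ s y →
    ψ x (bkt Γ s hs y z) = ψ (bkt Γ s hs x y) z - ψ y (bkt Γ s hs x z))

/-- `f : SV → ℂ` satisfies the recursive formulas associated to the 2-cocycle `ψ`. -/
def IsAssocMap (hs : 2 * s ∈ Γ) (ψ : SV Γ s →ₗ[ℂ] SV Γ s →ₗ[ℂ] ℂ)
    (f : SV Γ s →ₗ[ℂ] ℂ) : Prop :=
  (∀ i : ℕ, f (lgen Γ s 0 (zero_mem Γ) i)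
      = ψ (lgen Γ s 0 (zero_mem Γ) 0) (lgen Γ s 0 (zero_mem Γ) (i + 1)) / (i + 1)) ∧
  (∀ (α : ℂ) (hα : α ∈ Γ) (i : ℕ), α ≠ 0 →
    f (lgen Γ s α hα i)
      = (ψ (lgen Γ s 0 (zero_mem Γ) 0) (lgen Γ s α hα i) - (i : ℂ) * f (lgen Γ s α hα (i - 1))) / α) ∧
  (∀ (h0 : (0 : ℂ) - s ∈ Γ) (i : ℕ),
    f (ggen Γ s 0 h0 i) = (2 / (2 * (i : ℂ) - 1)) * ψ (lgen Γ s 0 (zero_mem Γ) 1) (ggen Γ s 0 h0 i)) ∧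
  (∀ (μ : ℂ) (hμ : μ - s ∈ Γ) (i : ℕ), μ ≠ 0 →
    f (ggen Γ s μ hμ i)
      = (ψ (lgen Γ s 0 (zero_mem Γ) 0) (ggen Γ s μ hμ i) - (i : ℂ) * f (ggen Γ s μ hμ (i - 1))) / μ)

/-! σ rescales every basis vector by a nonzero scalar and relabels it along the bijection
`α ↦ cα` of `Γ` and of `s + Γ`, so it is bijective. By bilinearity it suffices to compare
`σ [a, b]` with `[σ a, σ b]` on basis vectors `a, b`. The factors `τ` match because `τ` is
multiplicative and the bracket is `Ω`-graded. The powers of `c` match because in every bracket the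
coefficient of the top term is linear in the degrees (so it picks up one factor `c`), while the
lower term has an index-only coefficient and index one less; for `[G, G] = 2L` the missing factor
is `d² = c⁻¹`. -/

section ScaleReindex

variable {ι κ K : Type*} [Field K]

def scaleReindex (e : ι ≃ κ) (w : ι → K) : (ι →₀ K) →ₗ[K] (κ →₀ K) :=
  Finsupp.lsum K fun a => w a • Finsupp.lsingle (e a)

theorem scaleReindex_single (e : ι ≃ κ) (w : ι → K) (a : ι) (r : K) :
    scaleReindex e w (Finsupp.single a r) = Finsupp.single (e a) (w a * r) := by
  simp [scaleReindex, Finsupp.smul_single]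

theorem scaleReindex_bijective (e : ι ≃ κ) {w : ι → K} (hw : ∀ a, w a ≠ 0) :
    Function.Bijective (scaleReindex e w) := by
  refine Function.bijective_iff_has_inverse.mpr
    ⟨scaleReindex e.symm fun b => (w (e.symm b))⁻¹, fun x => ?_, fun y => ?_⟩
  · refine LinearMap.congr_fun (f := (scaleReindex e.symm _).comp (scaleReindex e w))
      (g := LinearMap.id) (Finsupp.lhom_ext fun a r => ?_) x
    simp only [LinearMap.comp_apply, scaleReindex_single, Equiv.symm_apply_apply,
      inv_mul_cancel_left₀ (hw a), LinearMap.id_apply]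
  · refine LinearMap.congr_fun (f := (scaleReindex e w).comp (scaleReindex e.symm _))
      (g := LinearMap.id) (Finsupp.lhom_ext fun b r => ?_) y
    simp only [LinearMap.comp_apply, scaleReindex_single, Equiv.apply_symm_apply,
      mul_inv_cancel_left₀ (hw (e.symm b)), LinearMap.id_apply]

end ScaleReindex

section Bracket

variable {Γ s} (hs : 2 * s ∈ Γ)

def bkLin : SV Γ s →ₗ[ℂ] SV Γ s →ₗ[ℂ] SV Γ s :=
  Finsupp.lsum ℂ fun a => LinearMap.toSpanSingleton ℂ _
    (Finsupp.lsum ℂ fun b => LinearMap.toSpanSingleton ℂ (SV Γ s) (bk Γ s hs a b))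

theorem bkt_eq_bkLin (x y : SV Γ s) : bkt Γ s hs x y = bkLin hs x y := by
  simp [bkt, bkLin, Finsupp.lsum_apply, LinearMap.finsupp_sum_apply, Finsupp.smul_sum, smul_smul]

theorem bkt_single_single (a b : Idx Γ s) (r t : ℂ) :
    bkt Γ s hs (Finsupp.single a r) (Finsupp.single b t) = (r * t) • bk Γ s hs a b := by
  simp [bkt]

theorem map_bkt_of_map_bk (f : SV Γ s →ₗ[ℂ] SV Γ s)
    (hf : ∀ a b, f (bk Γ s hs a b) =
      bkt Γ s hs (f (Finsupp.single a 1)) (f (Finsupp.single b 1))) (x y : SV Γ s) :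
    f (bkt Γ s hs x y) = bkt Γ s hs (f x) (f y) := by
  have h : (bkLin hs).compr₂ f = ((bkLin hs).compl₂ f).comp f := by
    ext a b : 4
    simpa [← bkt_eq_bkLin, bkt_single_single] using hf a b
  simpa [bkt_eq_bkLin] using LinearMap.congr_fun₂ h x y

theorem bk_inr_inl (q : {μ : ℂ // μ - s ∈ Γ} × ℕ) (p : Γ × ℕ) :
    bk Γ s hs (Sum.inr q) (Sum.inl p) = -bk Γ s hs (Sum.inl p) (Sum.inr q) :=
  rfl

end Bracket

section Automorphism

variable {Γ s} (hs : 2 * s ∈ Γ) (c : ℂ) (τ : ℂ → ℂ) (d : ℂ)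

variable (Γ s) in
def autWeight : Idx Γ s → ℂ
  | Sum.inl (α, i) => τ α * c ^ ((i : ℤ) - 1)
  | Sum.inr (μ, i) => τ μ * c ^ i * d

theorem autWeight_ne_zero (hc0 : c ≠ 0) (hτ0 : ∀ x ∈ Omega Γ s, τ x ≠ 0) (hd0 : d ≠ 0)
    (a : Idx Γ s) :
    autWeight Γ s c τ d a ≠ 0 := by
  rcases a with ⟨⟨α, hα⟩, i⟩ | ⟨⟨μ, hμ⟩, i⟩
  · exact mul_ne_zero (hτ0 α (gamma_mem_Omega Γ s hα)) (zpow_ne_zero _ hc0)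
  · exact mul_ne_zero (mul_ne_zero (hτ0 μ (smu_mem_Omega Γ s hμ)) (pow_ne_zero _ hc0)) hd0

variable (hc0 : c ≠ 0) (hcΓ : ∀ x : ℂ, x ∈ Γ ↔ c * x ∈ Γ)
  (hcs : ∀ x : ℂ, x - s ∈ Γ ↔ c * x - s ∈ Γ)

def idxMul : Idx Γ s ≃ Idx Γ s :=
  (((Equiv.mulLeft₀ c hc0).subtypeEquiv hcΓ).prodCongr (Equiv.refl ℕ)).sumCongr
    (((Equiv.mulLeft₀ c hc0).subtypeEquiv hcs).prodCongr (Equiv.refl ℕ))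

theorem idxMul_inl (p : Γ × ℕ) :
    idxMul c hc0 hcΓ hcs (Sum.inl p) = Sum.inl (⟨c * p.1, (hcΓ p.1).mp p.1.2⟩, p.2) :=
  rfl

theorem idxMul_inr (q : {μ : ℂ // μ - s ∈ Γ} × ℕ) :
    idxMul c hc0 hcΓ hcs (Sum.inr q) = Sum.inr (⟨c * q.1, (hcs q.1).mp q.1.2⟩, q.2) :=
  rfl

def autSV : SV Γ s →ₗ[ℂ] SV Γ s :=
  scaleReindex (idxMul c hc0 hcΓ hcs) (autWeight Γ s c τ d)

theorem autSV_single (a : Idx Γ s) (r : ℂ) :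
    autSV c τ d hc0 hcΓ hcs (Finsupp.single a r) =
      Finsupp.single (idxMul c hc0 hcΓ hcs a) (autWeight Γ s c τ d a * r) :=
  scaleReindex_single _ _ a r

theorem autSV_lgen (α : ℂ) (hα : α ∈ Γ) (i : ℕ) :
    autSV c τ d hc0 hcΓ hcs (lgen Γ s α hα i)
      = (τ α * c ^ ((i : ℤ) - 1)) • lgen Γ s (c * α) ((hcΓ α).mp hα) i := by
  rw [lgen, autSV_single, lgen, Finsupp.smul_single, smul_eq_mul, mul_one, mul_one]
  rfl

theorem autSV_ggen (μ : ℂ) (hμ : μ - s ∈ Γ) (i : ℕ) :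
    autSV c τ d hc0 hcΓ hcs (ggen Γ s μ hμ i)
      = (τ μ * c ^ i * d) • ggen Γ s (c * μ) ((hcs μ).mp hμ) i := by
  rw [ggen, autSV_single, ggen, Finsupp.smul_single, smul_eq_mul, mul_one, mul_one]
  rfl

theorem autSV_bk_inl_inl (hτ : ∀ x ∈ Omega Γ s, ∀ y ∈ Omega Γ s, τ (x + y) = τ x * τ y)
    (p p' : Γ × ℕ) :
    autSV c τ d hc0 hcΓ hcs (bk Γ s hs (Sum.inl p) (Sum.inl p')) =
      (autWeight Γ s c τ d (Sum.inl p) * autWeight Γ s c τ d (Sum.inl p')) •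
        bk Γ s hs (idxMul c hc0 hcΓ hcs (Sum.inl p)) (idxMul c hc0 hcΓ hcs (Sum.inl p')) := by
  obtain ⟨⟨α, hα⟩, i⟩ := p
  obtain ⟨⟨β, hβ⟩, j⟩ := p'
  simp only [idxMul_inl, bk, map_add, map_smul, autSV_lgen, ← mul_add, smul_add, smul_smul]
  rw [hτ α (gamma_mem_Omega Γ s hα) β (gamma_mem_Omega Γ s hβ)]
  congr 2
  · simp only [autWeight, Nat.cast_add, zpow_sub₀ hc0, zpow_add₀ hc0, zpow_one]
    field_simp
  · -- `i + j - 1` truncates at `i = j = 0`, where the coefficient `j - i` vanishes.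
    rcases (i + j).eq_zero_or_pos with hij | hij
    · obtain ⟨rfl, rfl⟩ := Nat.add_eq_zero_iff.mp hij
      simp
    · simp only [autWeight, Nat.cast_pred hij, Nat.cast_add, zpow_sub₀ hc0, zpow_add₀ hc0,
        zpow_one]
      field_simp

theorem autSV_bk_inl_inr (hτ : ∀ x ∈ Omega Γ s, ∀ y ∈ Omega Γ s, τ (x + y) = τ x * τ y)
    (p : Γ × ℕ) (q : {μ : ℂ // μ - s ∈ Γ} × ℕ) :
    autSV c τ d hc0 hcΓ hcs (bk Γ s hs (Sum.inl p) (Sum.inr q)) =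
      (autWeight Γ s c τ d (Sum.inl p) * autWeight Γ s c τ d (Sum.inr q)) •
        bk Γ s hs (idxMul c hc0 hcΓ hcs (Sum.inl p)) (idxMul c hc0 hcΓ hcs (Sum.inr q)) := by
  obtain ⟨⟨α, hα⟩, i⟩ := p
  obtain ⟨⟨β, hβ⟩, j⟩ := q
  simp only [idxMul_inl, idxMul_inr, bk, map_add, map_smul, autSV_ggen, ← mul_add, smul_add,
    smul_smul]
  rw [hτ α (gamma_mem_Omega Γ s hα) β (smu_mem_Omega Γ s hβ)]
  congr 2
  · simp only [autWeight, zpow_sub₀ hc0, zpow_natCast, zpow_one, pow_add]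
    field_simp
  · rcases (i + j).eq_zero_or_pos with hij | hij
    · obtain ⟨rfl, rfl⟩ := Nat.add_eq_zero_iff.mp hij
      simp
    · simp only [autWeight, pow_sub₀ c hc0 hij, zpow_sub₀ hc0, zpow_natCast, zpow_one, pow_add,
        pow_one]
      field_simp

theorem autSV_bk_inr_inr (hτ : ∀ x ∈ Omega Γ s, ∀ y ∈ Omega Γ s, τ (x + y) = τ x * τ y)
    (hd : d * d = c⁻¹) (q q' : {μ : ℂ // μ - s ∈ Γ} × ℕ) :
    autSV c τ d hc0 hcΓ hcs (bk Γ s hs (Sum.inr q) (Sum.inr q')) =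
      (autWeight Γ s c τ d (Sum.inr q) * autWeight Γ s c τ d (Sum.inr q')) •
        bk Γ s hs (idxMul c hc0 hcΓ hcs (Sum.inr q)) (idxMul c hc0 hcΓ hcs (Sum.inr q')) := by
  obtain ⟨⟨α, hα⟩, i⟩ := q
  obtain ⟨⟨β, hβ⟩, j⟩ := q'
  simp only [idxMul_inr, bk, map_smul, autSV_lgen, ← mul_add, smul_smul]
  rw [hτ α (smu_mem_Omega Γ s hα) β (smu_mem_Omega Γ s hβ)]
  congr 1
  simp only [autWeight, Nat.cast_add, zpow_sub₀ hc0, zpow_add₀ hc0, zpow_natCast, zpow_one]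
  linear_combination (-2 * τ α * τ β * c ^ i * c ^ j) * hd

theorem autSV_bk (hτ : ∀ x ∈ Omega Γ s, ∀ y ∈ Omega Γ s, τ (x + y) = τ x * τ y)
    (hd : d * d = c⁻¹) (a b : Idx Γ s) :
    autSV c τ d hc0 hcΓ hcs (bk Γ s hs a b) =
      (autWeight Γ s c τ d a * autWeight Γ s c τ d b) •
        bk Γ s hs (idxMul c hc0 hcΓ hcs a) (idxMul c hc0 hcΓ hcs b) := by
  rcases a with p | q <;> rcases b with p' | q'
  · exact autSV_bk_inl_inl hs c τ d hc0 hcΓ hcs hτ p p'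
  · exact autSV_bk_inl_inr hs c τ d hc0 hcΓ hcs hτ p q'
  · rw [idxMul_inr, idxMul_inl, bk_inr_inl, map_neg, autSV_bk_inl_inr hs c τ d hc0 hcΓ hcs hτ,
      mul_comm, bk_inr_inl, smul_neg, idxMul_inl, idxMul_inr]
  · exact autSV_bk_inr_inr hs c τ d hc0 hcΓ hcs hτ hd q q'

theorem autSV_bkt (hτ : ∀ x ∈ Omega Γ s, ∀ y ∈ Omega Γ s, τ (x + y) = τ x * τ y)
    (hd : d * d = c⁻¹) (x y : SV Γ s) :
    autSV c τ d hc0 hcΓ hcs (bkt Γ s hs x y) =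
      bkt Γ s hs (autSV c τ d hc0 hcΓ hcs x) (autSV c τ d hc0 hcΓ hcs y) := by
  refine map_bkt_of_map_bk hs _ (fun a b => ?_) x y
  rw [autSV_bk hs c τ d hc0 hcΓ hcs hτ hd, autSV_single, autSV_single, bkt_single_single,
    mul_one, mul_one]

end Automorphism

theorem aut_SV_construction_general (Γ : AddSubgroup ℂ)
    (s : ℂ) (hs : 2 * s ∈ Γ)
    (c : ℂ) (hc0 : c ≠ 0) (hcΓ : ∀ x : ℂ, x ∈ Γ ↔ c * x ∈ Γ)
    (hcs : ∀ x : ℂ, x - s ∈ Γ ↔ c * x - s ∈ Γ)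
    (τ : ℂ → ℂ) (hτ0 : ∀ x ∈ Omega Γ s, τ x ≠ 0)
    (hτ : ∀ x ∈ Omega Γ s, ∀ y ∈ Omega Γ s, τ (x + y) = τ x * τ y)
    (d : ℂ) (hd0 : d ≠ 0) (hd : d * d = c⁻¹) :
    ∃ σ : SV Γ s →ₗ[ℂ] SV Γ s,
      Function.Bijective σ ∧
      (∀ x y : SV Γ s, σ (bkt Γ s hs x y) = bkt Γ s hs (σ x) (σ y)) ∧
      (∀ (α : ℂ) (hα : α ∈ Γ) (i : ℕ),
        σ (lgen Γ s α hα i) = (τ α * c ^ ((i : ℤ) - 1)) • lgen Γ s (c * α) ((hcΓ α).mp hα) i) ∧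
      (∀ (μ : ℂ) (hμ : μ - s ∈ Γ) (i : ℕ),
        σ (ggen Γ s μ hμ i) = (τ μ * c ^ i * d) • ggen Γ s (c * μ) ((hcs μ).mp hμ) i) :=
  ⟨autSV c τ d hc0 hcΓ hcs,
    scaleReindex_bijective _ (autWeight_ne_zero c τ d hc0 hτ0 hd0),
    autSV_bkt hs c τ d hc0 hcΓ hcs hτ hd,
    autSV_lgen c τ d hc0 hcΓ hcs,
    autSV_ggen c τ d hc0 hcΓ hcs⟩

/-- Given `c` with `cΓ = Γ`, `c(s+Γ) = s+Γ`, a group homomorphism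
`τ : (Ω,+) → (ℂ*,·)` and `d` with `d² = c⁻¹`, the linear map sending
`L_{α,i} ↦ τ(α) c^(i-1) L_{cα,i}` and `G_{μ,i} ↦ τ(μ) c^i d G_{cμ,i}` is an
automorphism of `SV[Γ,s]`. -/
theorem aut_SV_construction (Γ : AddSubgroup ℂ) (hΓ : ∀ n : ℤ, (n : ℂ) ∈ Γ)
    (s : ℂ) (hs : 2 * s ∈ Γ)
    (c : ℂ) (hc0 : c ≠ 0) (hcΓ : ∀ x : ℂ, x ∈ Γ ↔ c * x ∈ Γ)
    (hcs : ∀ x : ℂ, x - s ∈ Γ ↔ c * x - s ∈ Γ)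
    (τ : ℂ → ℂ) (hτ0 : ∀ x ∈ Omega Γ s, τ x ≠ 0)
    (hτ : ∀ x ∈ Omega Γ s, ∀ y ∈ Omega Γ s, τ (x + y) = τ x * τ y)
    (d : ℂ) (hd0 : d ≠ 0) (hd : d * d = c⁻¹) :
    ∃ σ : SV Γ s →ₗ[ℂ] SV Γ s,
      Function.Bijective σ ∧
      (∀ x y : SV Γ s, σ (bkt Γ s hs x y) = bkt Γ s hs (σ x) (σ y)) ∧
      (∀ (α : ℂ) (hα : α ∈ Γ) (i : ℕ),
        σ (lgen Γ s α hα i) = (τ α * c ^ ((i : ℤ) - 1)) • lgen Γ s (c * α) ((hcΓ α).mp hα) i) ∧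
      (∀ (μ : ℂ) (hμ : μ - s ∈ Γ) (i : ℕ),
        σ (ggen Γ s μ hμ i) = (τ μ * c ^ i * d) • ggen Γ s (c * μ) ((hcs μ).mp hμ) i) :=
  aut_SV_construction_general Γ s hs c hc0 hcΓ hcs τ hτ0 hτ d hd0 hd

end SVSuper
end
end

section
/- Let ψ be a 2-cocycle on SV = SV[Γ,s] and let f be the linear map associated to ψ by the recursive formulas below; set φ = ψ − ψ_f. Then φ(L_{α,i}, G_{μ,j}) = 0 for all α ∈ Γ, μ ∈ s+Γ and all i, j ∈ ℤ_{≥0}. -/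
/-!
Write `B(i,j) = φ(L_{α,i}, G_{μ,j})`. The recursive definition of `f` is exactly what makes
`φ(L_{0,0}, G_{ν,k})` and `φ(L_{0,1}, G_{0,k})` vanish. Since `ψ_f` is a cocycle too, the cocycle
identity for `φ` with first argument `L_{0,0}` gives `(α+μ) B(i,j) + i B(i-1,j) + j B(i,j-1) = 0`,
which kills `B` by induction when `α + μ ≠ 0`. When `α + μ = 0`, the identity with `L_{0,1}` adds
`α (B(i+1,j) - B(i,j+1)) + (i+j-3/2) B(i,j) = 0`, and the two relations together force `B` to
vanish on each antidiagonal `i + j = n`, inductively in `n`.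
-/

noncomputable section

namespace SVSuper

variable (Γ : AddSubgroup ℂ) (s : ℂ)

theorem natCast_sub_three_halves_ne_zero (n : ℕ) : (n : ℂ) - 3 / 2 ≠ 0 := by
  have h : (2 * n - 3 : ℤ) ≠ 0 := by omega
  contrapose! h
  exact_mod_cast (by push_cast; linear_combination 2 * h : ((2 * n - 3 : ℤ) : ℂ) = 0)

theorem two_mul_natCast_sub_one_ne_zero (n : ℕ) : 2 * (n : ℂ) - 1 ≠ 0 := by
  have h : (2 * n - 1 : ℤ) ≠ 0 := by omega
  exact_mod_cast h

theorem eq_zero_of_recurrence {B : ℕ → ℕ → ℂ} {c : ℂ} (hc : c ≠ 0)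
    (h : ∀ i j : ℕ, c * B i j + i * B (i - 1) j + j * B i (j - 1) = 0) (i j : ℕ) : B i j = 0 := by
  induction i generalizing j with
  | zero =>
    induction j with
    | zero => simpa [hc] using h 0 0
    | succ j ih => simpa [ih, hc] using h 0 (j + 1)
  | succ i ihi =>
    induction j with
    | zero => simpa [ihi, hc] using h (i + 1) 0
    | succ j ih => simpa [ihi, ih, hc] using h (i + 1) (j + 1)

theorem eq_zero_of_recurrence_of_shift {B : ℕ → ℕ → ℂ} (α : ℂ)
    (h : ∀ i j : ℕ, (i : ℂ) * B (i - 1) j + j * B i (j - 1) = 0)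
    (hshift : ∀ i j : ℕ, α * (B (i + 1) j - B i (j + 1)) + ((i : ℂ) + j - 3 / 2) * B i j = 0)
    (i j : ℕ) : B i j = 0 := by
  by_cases hα : α = 0
  · have := hshift i j
    rw [hα, zero_mul, zero_add, ← Nat.cast_add] at this
    exact (mul_eq_zero.mp this).resolve_left (natCast_sub_three_halves_ne_zero _)
  suffices hdiag : ∀ n i j, i + j = n → B i j = 0 from hdiag _ i j rfl
  intro n
  induction n with
  | zero =>
    rintro i j hij
    obtain ⟨rfl, rfl⟩ : i = 0 ∧ j = 0 := by omega
    simpa using h 1 0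
  | succ n ih =>
    -- On the antidiagonal `a + b = n + 1`, `hshift` makes `B` constant and `h` then kills it.
    have step : ∀ a b, a + b = n → B (a + 1) b = 0 ∧ B a (b + 1) = 0 := by
      intro a b hab
      have heq : B (a + 1) b = B a (b + 1) := by
        have := hshift a b
        rw [ih a b hab, mul_zero, add_zero] at this
        exact sub_eq_zero.mp ((mul_eq_zero.mp this).resolve_left hα)
      have hsum := h (a + 1) (b + 1)
      simp only [Nat.add_sub_cancel, heq] at hsum
      have hzero : ((a + b + 2 : ℕ) : ℂ) * B a (b + 1) = 0 := by
        push_cast at hsum ⊢; linear_combination hsum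
      have hB := (mul_eq_zero.mp hzero).resolve_left
        (by exact_mod_cast (by omega : a + b + 2 ≠ 0))
      exact ⟨heq.trans hB, hB⟩
    rintro (_ | a) j hij
    · obtain rfl : j = n + 1 := by omega
      exact (step 0 n (by omega)).2
    · exact (step a j (by omega)).1

section Bracket

variable {Γ s} (hs : 2 * s ∈ Γ)

theorem lgen_congr {α β : ℂ} (h : α = β) (hα : α ∈ Γ) (hβ : β ∈ Γ) (i : ℕ) :
    lgen Γ s α hα i = lgen Γ s β hβ i := by subst h; rfl

theorem ggen_congr {μ ν : ℂ} (h : μ = ν) (hμ : μ - s ∈ Γ) (hν : ν - s ∈ Γ) (j : ℕ) :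
    ggen Γ s μ hμ j = ggen Γ s ν hν j := by subst h; rfl

theorem lgen_isEvenElt {α : ℂ} (hα : α ∈ Γ) (i : ℕ) : IsEvenElt Γ s (lgen Γ s α hα i) :=
  fun _ => Finsupp.single_eq_of_ne (by simp)

theorem bkt_single (a b : Idx Γ s) :
    bkt Γ s hs (Finsupp.single a 1) (Finsupp.single b 1) = bk Γ s hs a b := by
  rw [bkt, Finsupp.sum_single_index, Finsupp.sum_single_index] <;> simp

theorem bkt_lgen_lgen {α β : ℂ} (hα : α ∈ Γ) (hβ : β ∈ Γ) (i j : ℕ) :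
    bkt Γ s hs (lgen Γ s α hα i) (lgen Γ s β hβ j)
      = (β - α) • lgen Γ s (α + β) (add_mem hα hβ) (i + j)
        + ((j : ℂ) - i) • lgen Γ s (α + β) (add_mem hα hβ) (i + j - 1) :=
  bkt_single hs _ _

theorem bkt_lgen_ggen {α μ : ℂ} (hα : α ∈ Γ) (hμ : μ - s ∈ Γ) (i j : ℕ) :
    bkt Γ s hs (lgen Γ s α hα i) (ggen Γ s μ hμ j)
      = (μ - α / 2) • ggen Γ s (α + μ) (memLG Γ s hα hμ) (i + j)
        + ((j : ℂ) - i / 2) • ggen Γ s (α + μ) (memLG Γ s hα hμ) (i + j - 1) :=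
  bkt_single hs _ _

theorem bkt_lgen_zero_lgen (m : ℕ) {β : ℂ} (hβ : β ∈ Γ) (i : ℕ) :
    bkt Γ s hs (lgen Γ s 0 (zero_mem Γ) m) (lgen Γ s β hβ i)
      = β • lgen Γ s β hβ (m + i) + ((i : ℂ) - m) • lgen Γ s β hβ (m + i - 1) := by
  rw [bkt_lgen_lgen, lgen_congr (zero_add β) _ hβ, lgen_congr (zero_add β) _ hβ, sub_zero]

theorem bkt_lgen_zero_ggen (m : ℕ) {μ : ℂ} (hμ : μ - s ∈ Γ) (j : ℕ) :
    bkt Γ s hs (lgen Γ s 0 (zero_mem Γ) m) (ggen Γ s μ hμ j)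
      = μ • ggen Γ s μ hμ (m + j) + ((j : ℂ) - m / 2) • ggen Γ s μ hμ (m + j - 1) := by
  rw [bkt_lgen_ggen, ggen_congr (zero_add μ) _ hμ, ggen_congr (zero_add μ) _ hμ, zero_div,
    sub_zero]

end Bracket

section Cocycle

variable {Γ s} {hs : 2 * s ∈ Γ} {ψ : SV Γ s →ₗ[ℂ] SV Γ s →ₗ[ℂ] ℂ} {f : SV Γ s →ₗ[ℂ] ℂ}

theorem IsCocycle.jacobi_lgen_lgen (hψ : IsCocycle Γ s hs ψ) {α β : ℂ} (hα : α ∈ Γ)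
    (hβ : β ∈ Γ) (i j : ℕ) (z : SV Γ s) :
    ψ (lgen Γ s α hα i) (bkt Γ s hs (lgen Γ s β hβ j) z)
      = ψ (bkt Γ s hs (lgen Γ s α hα i) (lgen Γ s β hβ j)) z
        + ψ (lgen Γ s β hβ j) (bkt Γ s hs (lgen Γ s α hα i) z) :=
  hψ.2.2.1 _ _ z (Or.inl (lgen_isEvenElt hα i)) (Or.inl (lgen_isEvenElt hβ j))
    (Or.inl (lgen_isEvenElt hα i))

theorem IsAssocMap.psi_lgen_zero_one_ggen_zero (hf : IsAssocMap Γ s hs ψ f) {ν : ℂ}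
    (hν : ν - s ∈ Γ) (hν0 : ν = 0) (k : ℕ) :
    ψ (lgen Γ s 0 (zero_mem Γ) 1) (ggen Γ s ν hν k)
      = ((k : ℂ) - 1 / 2) * f (ggen Γ s ν hν k) := by
  subst hν0
  have hk := two_mul_natCast_sub_one_ne_zero k
  rw [hf.2.2.1 hν k, ← mul_assoc,
    show ((k : ℂ) - 1 / 2) * (2 / (2 * k - 1)) = (2 * k - 1) / (2 * k - 1) by ring,
    div_self hk, one_mul]

theorem IsAssocMap.psi_lgen_zero_zero_ggen (hψ : IsCocycle Γ s hs ψ)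
    (hf : IsAssocMap Γ s hs ψ f) {ν : ℂ} (hν : ν - s ∈ Γ) (k : ℕ) :
    ψ (lgen Γ s 0 (zero_mem Γ) 0) (ggen Γ s ν hν k)
      = ν * f (ggen Γ s ν hν k) + k * f (ggen Γ s ν hν (k - 1)) := by
  by_cases hν0 : ν = 0
  · -- Here `f` is defined through `L_{0,1}`; the cocycle identity for `L_{0,1}, L_{0,0}, G_{0,k}`
    -- transfers the formula to `L_{0,0}`.
    subst hν0
    have hc := hψ.jacobi_lgen_lgen (zero_mem Γ) (zero_mem Γ) 1 0 (ggen Γ s 0 hν k)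
    rw [bkt_lgen_zero_ggen, bkt_lgen_zero_lgen, bkt_lgen_zero_ggen] at hc
    simp only [map_add, map_smul, LinearMap.add_apply, LinearMap.smul_apply, smul_eq_mul,
      zero_add, add_zero, Nat.add_sub_cancel_left, Nat.sub_self,
      hf.psi_lgen_zero_one_ggen_zero hν rfl] at hc
    rcases k with _ | k
    · simp only [Nat.cast_zero] at hc
      linear_combination (2 / 3 : ℂ) * hc
    · have hk : (2 * (k : ℂ) - 1) * (ψ (lgen Γ s 0 (zero_mem Γ) 0) (ggen Γ s 0 hν (k + 1))
          - (k + 1) * f (ggen Γ s 0 hν k)) = 0 := by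
        simp only [Nat.add_sub_cancel] at hc
        push_cast at hc
        linear_combination -2 * hc
      simpa [sub_eq_zero] using
        (mul_eq_zero.mp hk).resolve_left (two_mul_natCast_sub_one_ne_zero k)
  · have h := hf.2.2.2 ν hν k hν0
    field_simp at h
    linear_combination -h

end Cocycle

variable {Γ s} in
/-- `φ(L_{α,i}, G_{μ,j})` for `φ = ψ - ψ_f`. -/
def phiLG (hs : 2 * s ∈ Γ) (ψ : SV Γ s →ₗ[ℂ] SV Γ s →ₗ[ℂ] ℂ) (f : SV Γ s →ₗ[ℂ] ℂ) {α μ : ℂ}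
    (hα : α ∈ Γ) (hμ : μ - s ∈ Γ) (i j : ℕ) : ℂ :=
  ψ (lgen Γ s α hα i) (ggen Γ s μ hμ j) - f (bkt Γ s hs (lgen Γ s α hα i) (ggen Γ s μ hμ j))

section Recurrence

variable {Γ s} {hs : 2 * s ∈ Γ} {ψ : SV Γ s →ₗ[ℂ] SV Γ s →ₗ[ℂ] ℂ} {f : SV Γ s →ₗ[ℂ] ℂ}
  {α μ : ℂ} (hα : α ∈ Γ) (hμ : μ - s ∈ Γ)

theorem map_bkt_lgen_ggen (i j : ℕ) :
    f (bkt Γ s hs (lgen Γ s α hα i) (ggen Γ s μ hμ j))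
      = (μ - α / 2) * f (ggen Γ s (α + μ) (memLG Γ s hα hμ) (i + j))
        + ((j : ℂ) - i / 2) * f (ggen Γ s (α + μ) (memLG Γ s hα hμ) (i + j - 1)) := by
  rw [bkt_lgen_ggen, map_add, map_smul, map_smul, smul_eq_mul, smul_eq_mul]

theorem phiLG_recurrence (hψ : IsCocycle Γ s hs ψ) (hf : IsAssocMap Γ s hs ψ f) (i j : ℕ) :
    (α + μ) * phiLG hs ψ f hα hμ i j + i * phiLG hs ψ f hα hμ (i - 1) j
      + j * phiLG hs ψ f hα hμ i (j - 1) = 0 := by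
  have hc := hψ.jacobi_lgen_lgen (zero_mem Γ) hα 0 i (ggen Γ s μ hμ j)
  rw [bkt_lgen_ggen, bkt_lgen_zero_lgen, bkt_lgen_zero_ggen] at hc
  simp only [map_add, map_smul, LinearMap.add_apply, LinearMap.smul_apply, smul_eq_mul,
    Nat.cast_zero, zero_div, sub_zero, Nat.zero_add, hf.psi_lgen_zero_zero_ggen hψ] at hc
  simp only [phiLG, map_bkt_lgen_ggen]
  rcases i with _ | i <;> rcases j with _ | j <;>
    simp only [← add_assoc, Nat.add_right_comm _ 1, Nat.add_sub_cancel, Nat.zero_sub,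
      Nat.add_zero, Nat.zero_add] at hc ⊢ <;>
    push_cast at hc ⊢ <;> linear_combination -hc

theorem phiLG_shift (hψ : IsCocycle Γ s hs ψ) (hf : IsAssocMap Γ s hs ψ f) (h0 : α + μ = 0)
    (i j : ℕ) :
    α * (phiLG hs ψ f hα hμ (i + 1) j - phiLG hs ψ f hα hμ i (j + 1))
      + ((i : ℂ) + j - 3 / 2) * phiLG hs ψ f hα hμ i j = 0 := by
  have hc := hψ.jacobi_lgen_lgen (zero_mem Γ) hα 1 i (ggen Γ s μ hμ j)
  rw [bkt_lgen_ggen, bkt_lgen_zero_lgen, bkt_lgen_zero_ggen] at hc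
  simp only [map_add, map_smul, LinearMap.add_apply, LinearMap.smul_apply, smul_eq_mul,
    hf.psi_lgen_zero_one_ggen_zero _ h0] at hc
  obtain rfl : μ = -α := by linear_combination h0
  simp only [phiLG, map_bkt_lgen_ggen]
  rcases i with _ | i <;> rcases j with _ | j <;>
    simp only [← add_assoc, Nat.add_right_comm _ 1, Nat.add_sub_cancel, Nat.zero_sub, Nat.add_zero,
      Nat.zero_add] at hc ⊢ <;>
    push_cast at hc ⊢ <;> linear_combination -hc

end Recurrence

theorem cocycle_LG_general (Γ : AddSubgroup ℂ)
    (s : ℂ) (hs : 2 * s ∈ Γ) :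
    ∀ ψ : SV Γ s →ₗ[ℂ] SV Γ s →ₗ[ℂ] ℂ, IsCocycle Γ s hs ψ →
      ∀ f : SV Γ s →ₗ[ℂ] ℂ, IsAssocMap Γ s hs ψ f →
        ∀ (α : ℂ) (hα : α ∈ Γ) (i : ℕ) (μ : ℂ) (hμ : μ - s ∈ Γ) (j : ℕ),
          ψ (lgen Γ s α hα i) (ggen Γ s μ hμ j)
            - f (bkt Γ s hs (lgen Γ s α hα i) (ggen Γ s μ hμ j)) = 0 := by
  intro ψ hψ f hf α hα i μ hμ j
  change phiLG hs ψ f hα hμ i j = 0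
  by_cases h0 : α + μ = 0
  · refine eq_zero_of_recurrence_of_shift α (fun i j => ?_) (phiLG_shift hα hμ hψ hf h0) i j
    simpa [h0] using phiLG_recurrence hα hμ hψ hf i j
  · exact eq_zero_of_recurrence h0 (phiLG_recurrence hα hμ hψ hf) i j

/-- For a 2-cocycle `ψ` with associated map `f`, the 2-cocycle `φ = ψ - ψ_f`
vanishes on pairs `(L_{α,i}, G_{μ,j})`. -/
theorem cocycle_LG (Γ : AddSubgroup ℂ) (hΓ : ∀ n : ℤ, (n : ℂ) ∈ Γ)
    (s : ℂ) (hs : 2 * s ∈ Γ) :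
    ∀ ψ : SV Γ s →ₗ[ℂ] SV Γ s →ₗ[ℂ] ℂ, IsCocycle Γ s hs ψ →
      ∀ f : SV Γ s →ₗ[ℂ] ℂ, IsAssocMap Γ s hs ψ f →
        ∀ (α : ℂ) (hα : α ∈ Γ) (i : ℕ) (μ : ℂ) (hμ : μ - s ∈ Γ) (j : ℕ),
          ψ (lgen Γ s α hα i) (ggen Γ s μ hμ j)
            - f (bkt Γ s hs (lgen Γ s α hα i) (ggen Γ s μ hμ j)) = 0 :=
  cocycle_LG_general Γ s hs

end SVSuper
end
end
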